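/- arXiv:1402.5152 — 11 statements merged into one kernel-verified Lean document; each statement's English description precedes it below -/
import Mathlib

section
/- In any associative ring, the tetrad {a,b,c,d} = abcd + dcba satisfies the identity {{a,b,c,d},e,f,g} + {{a,b,f,e},d,c,g} + {{d,c,f,e},a,b,g} - {g,{b,a,d,c},f,e} - {g,{b,a,e,f},c,d} - {g,{c,d,e,f},b,a} = 0 for all a,b,c,d,e,f,g. -/
def tetrad {A : Type*} [NonUnitalRing A] (a b c d : A) : A := a * b * c * d + d * c * b * a

theorem tetrad_deg7_first {A : Type*} [NonUnitalRing A] (a b c d e f g : A) :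
    tetrad (tetrad a b c d) e f g + tetrad (tetrad a b f e) d c g
      + tetrad (tetrad d c f e) a b g - tetrad g (tetrad b a d c) f e
      - tetrad g (tetrad b a e f) c d - tetrad g (tetrad c d e f) b a = 0 := by
  simp only [tetrad]
  noncomm_ring
end

section
/- In any associative ring, the tetrad satisfies the identity {{a,b,c,d},e,f,g} - {{a,b,g,f},e,c,d} + {{a,b,d,c},e,g,f} - {{a,b,f,g},e,d,c} + {{a,e,c,d},b,g,f} - {{a,e,g,f},b,d,c} + {{a,e,d,c},b,f,g} - {{a,e,f,g},b,c,d} - {a,{b,c,d,e},f,g} + {a,{b,g,f,e},c,d} - {a,{b,d,c,e},g,f} + {a,{b,f,g,e},d,c} = 0 for all a,b,c,d,e,f,g. -/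
theorem tetrad_deg7_second {A : Type*} [NonUnitalRing A] (a b c d e f g : A) :
    tetrad (tetrad a b c d) e f g - tetrad (tetrad a b g f) e c d
      + tetrad (tetrad a b d c) e g f - tetrad (tetrad a b f g) e d c
      + tetrad (tetrad a e c d) b g f - tetrad (tetrad a e g f) b d c
      + tetrad (tetrad a e d c) b f g - tetrad (tetrad a e f g) b c d
      - tetrad a (tetrad b c d e) f g + tetrad a (tetrad b g f e) c d
      - tetrad a (tetrad b d c e) g f + tetrad a (tetrad b f g e) d c = 0 := by simp only [tetrad]; noncomm_ring
end

section
/- In any associative ring, the tetrad satisfies the 17-term identity {{a,b,c,d},e,f,g} - {{a,f,g,c},b,e,d} + {{c,b,a,d},e,g,f} + {{f,b,c,e},g,a,d} - {{f,g,a,e},c,b,d} - {{f,g,a,d},b,c,e} - {{f,g,e,d},a,b,c} + {{g,b,a,e},f,c,d} - {{g,f,c,e},a,b,d} - {{g,f,c,d},b,a,e} - {{g,f,e,d},c,b,a} + {{e,a,b,d},c,f,g} + {{e,c,b,d},a,g,f} + {a,{b,c,g,f},e,d} + {c,{b,a,f,g},e,d} - {f,{b,c,e,g},a,d} - {g,{b,a,e,f},c,d}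 + {e,{a,g,f,c},b,d} = 0 for all a,b,c,d,e,f,g. -/
theorem tetrad_deg7_third {A : Type*} [NonUnitalRing A] (a b c d e f g : A) :
    tetrad (tetrad a b c d) e f g - tetrad (tetrad a f g c) b e d
      + tetrad (tetrad c b a d) e g f + tetrad (tetrad f b c e) g a d
      - tetrad (tetrad f g a e) c b d - tetrad (tetrad f g a d) b c e
      - tetrad (tetrad f g e d) a b c + tetrad (tetrad g b a e) f c d
      - tetrad (tetrad g f c e) a b d - tetrad (tetrad g f c d) b a e
      - tetrad (tetrad g f e d) c b a + tetrad (tetrad e a b d) c f g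
      + tetrad (tetrad e c b d) a g f + tetrad a (tetrad b c g f) e d
      + tetrad c (tetrad b a f g) e d - tetrad f (tetrad b c e g) a d
      - tetrad g (tetrad b a e f) c d + tetrad e (tetrad a g f c) b d = 0 := by
  simp only [tetrad]
  noncomm_ring
end

section
/- In any associative ring, the anti-tetrad [a,b,c,d] = abcd - dcba satisfies the identity [[a,b,c,d],e,f,g] - [[a,b,f,e],d,c,g] + [[d,c,f,e],a,b,g] + [g,[b,a,d,c],f,e] - [g,[b,a,e,f],c,d] + [g,[c,d,e,f],b,a] = 0 for all a,b,c,d,e,f,g. -/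
def antitetrad {A : Type*} [NonUnitalRing A] (a b c d : A) : A := a * b * c * d - d * c * b * a

theorem antitetrad_deg7_first {A : Type*} [NonUnitalRing A] (a b c d e f g : A) :
    antitetrad (antitetrad a b c d) e f g - antitetrad (antitetrad a b f e) d c g
      + antitetrad (antitetrad d c f e) a b g + antitetrad g (antitetrad b a d c) f e
      - antitetrad g (antitetrad b a e f) c d + antitetrad g (antitetrad c d e f) b a = 0 := by
  simp only [antitetrad]; noncomm_ring
end

section
/- In any associative ring, the anti-tetrad satisfies the identity [[a,b,c,b],d,e,a] - [[a,b,c,b],e,d,a] - [[a,d,e,a],b,c,b] - [a,[b,c,b,d],e,a] + [a,[b,c,b,e],d,a] = 0 for all a,b,c,d,e. -/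
theorem antitetrad_nonlinear_first {A : Type*} [NonUnitalRing A] (a b c d e : A) :
    antitetrad (antitetrad a b c b) d e a - antitetrad (antitetrad a b c b) e d a
      - antitetrad (antitetrad a d e a) b c b - antitetrad a (antitetrad b c b d) e a
      + antitetrad a (antitetrad b c b e) d a = 0 := by simp only [antitetrad]; noncomm_ring
end

section
/- In any associative ring, the anti-tetrad satisfies the identity [[a,c,a,b],b,d,e] - [[a,c,a,e],d,b,b] + [[b,b,d,e],a,c,a] + [b,[a,c,a,b],d,e] - [e,[a,c,a,d],b,b] = 0 for all a,b,c,d,e. -/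
theorem antitetrad_nonlinear_second {A : Type*} [NonUnitalRing A] (a b c d e : A) :
    antitetrad (antitetrad a c a b) b d e - antitetrad (antitetrad a c a e) d b b
      + antitetrad (antitetrad b b d e) a c a + antitetrad b (antitetrad a c a b) d e
      - antitetrad e (antitetrad a c a d) b b = 0 := by simp only [antitetrad]; noncomm_ring
end

section
/- In any associative ring, the anti-tetrad satisfies the 12-term identity [[a,a,b,c],d,e,f] + [[a,a,e,f],d,c,b] - [[a,a,e,b],c,d,f] - [[a,d,c,b],a,e,f] - [[f,a,a,c],d,e,b] + [[f,d,c,b],e,a,a] + [[f,d,e,b],a,a,c] - [a,[a,b,c,d],e,f] - [f,[a,a,d,e],b,c] + [f,[a,a,c,d],e,b] + [f,[a,b,e,d],a,c] - [c,[a,d,e,b],a,f] = 0 for all a,b,c,d,e,f. -/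
theorem antitetrad_nonlinear_third {A : Type*} [NonUnitalRing A] (a b c d e f : A) :
    antitetrad (antitetrad a a b c) d e f + antitetrad (antitetrad a a e f) d c b
      - antitetrad (antitetrad a a e b) c d f - antitetrad (antitetrad a d c b) a e f
      - antitetrad (antitetrad f a a c) d e b + antitetrad (antitetrad f d c b) e a a
      + antitetrad (antitetrad f d e b) a a c - antitetrad a (antitetrad a b c d) e f
      - antitetrad f (antitetrad a a d e) b c + antitetrad f (antitetrad a a c d) e b
      + antitetrad f (antitetrad a b e d) a c - antitetrad c (antitetrad a d e b) a f
      = 0 := by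
  simp only [antitetrad]
  noncomm_ring
end

section
/- In any associative ring, the anti-tetrad satisfies the degree-10 identity [[[a,a,b,a],a,b,a],a,a,a] - [a,[[a,a,a,b],a,b,a],a,a] - [a,[a,[a,a,b,a],a,a],b,a] + [a,[a,[a,a,b,a],b,a],a,a] = 0 for all a,b. -/
theorem antitetrad_deg10_first {A : Type*} [NonUnitalRing A] (a b : A) :
    antitetrad (antitetrad (antitetrad a a b a) a b a) a a a
      - antitetrad a (antitetrad (antitetrad a a a b) a b a) a a
      - antitetrad a (antitetrad a (antitetrad a a b a) a a) b a
      + antitetrad a (antitetrad a (antitetrad a a b a) b a) a a = 0 := by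
  simp only [antitetrad]
  noncomm_ring
end

section
/- In any associative ring, the anti-tetrad satisfies the degree-10 identity [[[a,a,b,a],a,b,a],b,a,a] + [[a,[a,b,a,b],a,a],b,a,a] - [a,[[a,a,b,a],b,a,a],b,a] - [a,[[a,b,a,b],a,a,b],a,a] - [a,[[a,b,a,b],a,b,a],a,a] - [[a,a,b,a],[a,b,a,b],a,a] = 0 for all a,b. -/
theorem antitetrad_deg10_second {A : Type*} [NonUnitalRing A] (a b : A) :
    antitetrad (antitetrad (antitetrad a a b a) a b a) b a a
      + antitetrad (antitetrad a (antitetrad a b a b) a a) b a a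
      - antitetrad a (antitetrad (antitetrad a a b a) b a a) b a
      - antitetrad a (antitetrad (antitetrad a b a b) a a b) a a
      - antitetrad a (antitetrad (antitetrad a b a b) a b a) a a
      - antitetrad (antitetrad a a b a) (antitetrad a b a b) a a = 0 := by simp only [antitetrad]; noncomm_ring
end

section
/- In any associative ring, the anti-tetrad satisfies the degree-10 identity [[b,[a,a,a,b],a,b],a,a,b] + [[b,[a,a,b,a],a,b],a,a,b] - [b,[[a,a,a,b],b,a,a],a,b] - [b,[[a,a,b,a],a,a,b],a,b] = 0 for all a,b. -/
theorem antitetrad_deg10_third {A : Type*} [NonUnitalRing A] (a b : A) :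
    antitetrad (antitetrad b (antitetrad a a a b) a b) a a b
      + antitetrad (antitetrad b (antitetrad a a b a) a b) a a b
      - antitetrad b (antitetrad (antitetrad a a a b) b a a) a b
      - antitetrad b (antitetrad (antitetrad a a b a) a a b) a b = 0 := by simp only [antitetrad]; noncomm_ring
end

section
/- In the free associative algebra on two generators a, b over ℚ, let I be the two-sided ideal generated by the five elements b², a³, bab, aba² + a²ba - a, and ba²b - b. Then the quotient algebra has dimension at most 10; specifically, the cosets of the 10 monomials 1, a, b, a², ab, ba, a²b, aba, ba², a²ba span the quotient. -/
theorem UD11_span :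
    let a : FreeAlgebra ℚ (Fin 2) := FreeAlgebra.ι ℚ 0
    let b : FreeAlgebra ℚ (Fin 2) := FreeAlgebra.ι ℚ 1
    let G : Set (FreeAlgebra ℚ (Fin 2)) :=
      {b * b, a * a * a, b * a * b, a * b * a * a + a * a * b * a - a, b * a * a * b - b}
    Submodule.span ℚ
      (({1, a, b, a * a, a * b, b * a, a * a * b, a * b * a, b * a * a, a * a * b * a} :
          Set (FreeAlgebra ℚ (Fin 2))) ∪
        {y | ∃ p q g, g ∈ G ∧ y = p * g * q}) = ⊤ := by
  intro a b G
  have hg1 : b * b ∈ G := Set.mem_insert _ _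
  have hg2 : a * a * a ∈ G := Set.mem_insert_of_mem _ (Set.mem_insert _ _)
  have hg3 : b * a * b ∈ G :=
    Set.mem_insert_of_mem _ (Set.mem_insert_of_mem _ (Set.mem_insert _ _))
  have hg4 : a * b * a * a + a * a * b * a - a ∈ G :=
    Set.mem_insert_of_mem _ (Set.mem_insert_of_mem _
      (Set.mem_insert_of_mem _ (Set.mem_insert _ _)))
  have hg5 : b * a * a * b - b ∈ G :=
    Set.mem_insert_of_mem _ (Set.mem_insert_of_mem _
      (Set.mem_insert_of_mem _ (Set.mem_insert_of_mem _ rfl)))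
  have ha : a = FreeAlgebra.ι ℚ 0 := rfl
  have hb : b = FreeAlgebra.ι ℚ 1 := rfl
  clear_value a b G
  set M : Set (FreeAlgebra ℚ (Fin 2)) :=
    {1, a, b, a * a, a * b, b * a, a * a * b, a * b * a, b * a * a, a * a * b * a} with hMdef
  set S := Submodule.span ℚ (M ∪ {y | ∃ p q g, g ∈ G ∧ y = p * g * q}) with hSdef
  have hM : ∀ m ∈ M, m ∈ S := fun m hm => Submodule.subset_span (Or.inl hm)
  have hideal : ∀ p q g, g ∈ G → p * g * q ∈ S := fun p q g hg =>
    Submodule.subset_span (Or.inr ⟨p, q, g, hg, rfl⟩)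
  have m1 : (1 : FreeAlgebra ℚ (Fin 2)) ∈ S := hM 1 (by simp [hMdef])
  have ma : a ∈ S := hM a (by simp [hMdef])
  have mb : b ∈ S := hM b (by simp [hMdef])
  have maa : a * a ∈ S := hM _ (by simp [hMdef])
  have mab : a * b ∈ S := hM _ (by simp [hMdef])
  have mba : b * a ∈ S := hM _ (by simp [hMdef])
  have maab : a * a * b ∈ S := hM _ (by simp [hMdef])
  have maba : a * b * a ∈ S := hM _ (by simp [hMdef])
  have mbaa : b * a * a ∈ S := hM _ (by simp [hMdef])
  have maaba : a * a * b * a ∈ S := hM _ (by simp [hMdef])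
  -- closure under left multiplication by a and b
  have key : ∀ y ∈ S, a * y ∈ S ∧ b * y ∈ S := by
    intro y hy
    induction hy using Submodule.span_induction with
    | mem x hx =>
      rcases hx with hx | ⟨p, q, g, hg, rfl⟩
      · simp only [hMdef, Set.mem_insert_iff, Set.mem_singleton_iff] at hx
        rcases hx with h | h | h | h | h | h | h | h | h | h <;> rw [h]
        · exact ⟨by simpa using ma, by simpa using mb⟩
        · constructor
          · simpa using maa
          · simpa using mba
        · constructor
          · simpa using mab
          · have : b * b = 1 * (b * b) * 1 := by noncomm_ring
            rw [this]; exact hideal 1 1 _ hg1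
        · constructor
          · have : a * (a * a) = 1 * (a * a * a) * 1 := by noncomm_ring
            rw [this]; exact hideal 1 1 _ hg2
          · have : b * (a * a) = b * a * a := by noncomm_ring
            rw [this]; exact mbaa
        · constructor
          · have : a * (a * b) = a * a * b := by noncomm_ring
            rw [this]; exact maab
          · have : b * (a * b) = 1 * (b * a * b) * 1 := by noncomm_ring
            rw [this]; exact hideal 1 1 _ hg3
        · constructor
          · have : a * (b * a) = a * b * a := by noncomm_ring
            rw [this]; exact maba
          · have : b * (b * a) = 1 * (b * b) * a := by noncomm_ring
            rw [this]; exact hideal 1 a _ hg1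
        · constructor
          · have : a * (a * a * b) = 1 * (a * a * a) * b := by noncomm_ring
            rw [this]; exact hideal 1 b _ hg2
          · have : b * (a * a * b) = (b * a * a * b - b) + b := by noncomm_ring
            rw [this]; exact Submodule.add_mem S (by simpa using hideal 1 1 _ hg5) mb
        · constructor
          · have : a * (a * b * a) = a * a * b * a := by noncomm_ring
            rw [this]; exact maaba
          · have : b * (a * b * a) = 1 * (b * a * b) * a := by noncomm_ring
            rw [this]; exact hideal 1 a _ hg3
        · constructor
          · have : a * (b * a * a) =
                1 * (a * b * a * a + a * a * b * a - a) * 1 - a * a * b * a + a := by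
              noncomm_ring
            rw [this]
            exact Submodule.add_mem S (Submodule.sub_mem S (hideal 1 1 _ hg4) maaba) ma
          · have : b * (b * a * a) = 1 * (b * b) * (a * a) := by noncomm_ring
            rw [this]; exact hideal 1 (a * a) _ hg1
        · constructor
          · have : a * (a * a * b * a) = 1 * (a * a * a) * (b * a) := by noncomm_ring
            rw [this]; exact hideal 1 (b * a) _ hg2
          · have : b * (a * a * b * a) = 1 * (b * a * a * b - b) * a + b * a := by
              noncomm_ring
            rw [this]; exact Submodule.add_mem S (hideal 1 a _ hg5) mba
      · constructor
        · have : a * (p * g * q) = (a * p) * g * q := by noncomm_ring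
          rw [this]; exact hideal (a * p) q g hg
        · have : b * (p * g * q) = (b * p) * g * q := by noncomm_ring
          rw [this]; exact hideal (b * p) q g hg
    | zero => simp
    | add x y hx hy ihx ihy =>
      exact ⟨by rw [mul_add]; exact Submodule.add_mem S ihx.1 ihy.1,
             by rw [mul_add]; exact Submodule.add_mem S ihx.2 ihy.2⟩
    | smul r x hx ihx =>
      exact ⟨by rw [mul_smul_comm]; exact Submodule.smul_mem S r ihx.1,
             by rw [mul_smul_comm]; exact Submodule.smul_mem S r ihx.2⟩
  -- every element multiplies S into S
  have hmul : ∀ x : FreeAlgebra ℚ (Fin 2), ∀ y ∈ S, x * y ∈ S := by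
    intro x
    induction x using FreeAlgebra.induction with
    | grade0 r =>
      intro y hy
      rw [← Algebra.smul_def]
      exact Submodule.smul_mem S r hy
    | grade1 i =>
      intro y hy
      fin_cases i
      · exact ha ▸ (key y hy).1
      · exact hb ▸ (key y hy).2
    | mul x z ihx ihz =>
      intro y hy
      rw [mul_assoc]
      exact ihx _ (ihz y hy)
    | add x z ihx ihz =>
      intro y hy
      rw [add_mul]
      exact Submodule.add_mem S (ihx y hy) (ihz y hy)
  rw [eq_top_iff]
  intro x _
  have := hmul x 1 m1
  simpa using this
end
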